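/- For the discrete-time linear-quadratic problem, the optimal value function with horizon length N is the quadratic form given by the Riccati recursion: for every N ∈ ℕ and every x ∈ ℝⁿ, inf over control sequences (u_0,…,u_{N−1}) ∈ (ℝᵐ)^N of Σ_{k=0}^{N−1} ½(x_k^⊤Qx_k + u_k^⊤Ru_k) + ½x_N^⊤Q_f x_N (subject to x_0 = x, x_{k+1} = Ax_k + Bu_k) equals ½x^⊤P_N x. -/

import Mathlib

/-
Dynamic programming. Completing the square in `u` shows that the one-step cost-to-go
`xᵀQx + uᵀRu + (Ax + Bu)ᵀP(Ax + Bu)` equals `xᵀ(riccatiStep P)x` plus the quadratic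
`(u + Kx)ᵀ(R + BᵀPB)(u + Kx)` with `K = riccatiGain P`, which is nonnegative and vanishes at the
feedback `u = -Kx`.
By induction on the horizon, the least cost from `x` is `½ xᵀP_N x`: any control costs at least
this much, and applying the feedback first and then an optimal control from the next state
attains it.
-/

open Matrix

/-- Riccati iterates: `ric A B Q R Qf 0 = Qf` and
`ric (k+1) = Aᵀ P_k A − Aᵀ P_k B (R + Bᵀ P_k B)⁻¹ Bᵀ P_k A + Q`. -/
noncomputable def ric {n m : ℕ} (A : Matrix (Fin n) (Fin n) ℝ) (B : Matrix (Fin n) (Fin m) ℝ)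
    (Q : Matrix (Fin n) (Fin n) ℝ) (R : Matrix (Fin m) (Fin m) ℝ)
    (Qf : Matrix (Fin n) (Fin n) ℝ) : ℕ → Matrix (Fin n) (Fin n) ℝ
  | 0 => Qf
  | k + 1 =>
    Aᵀ * ric A B Q R Qf k * A -
      Aᵀ * ric A B Q R Qf k * B * (R + Bᵀ * ric A B Q R Qf k * B)⁻¹ *
        Bᵀ * ric A B Q R Qf k * A + Q

/-- Trajectory of the linear system `x_{k+1} = A x_k + B u_k` from initial state `x`. -/
def lintraj {n m : ℕ} (A : Matrix (Fin n) (Fin n) ℝ) (B : Matrix (Fin n) (Fin m) ℝ)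
    (x : Fin n → ℝ) (u : ℕ → Fin m → ℝ) : ℕ → (Fin n → ℝ)
  | 0 => x
  | k + 1 => A *ᵥ lintraj A B x u k + B *ᵥ u k

/-- The linear-quadratic objective with horizon `N`. -/
noncomputable def lqCost {n m : ℕ} (A : Matrix (Fin n) (Fin n) ℝ) (B : Matrix (Fin n) (Fin m) ℝ)
    (Q : Matrix (Fin n) (Fin n) ℝ) (R : Matrix (Fin m) (Fin m) ℝ)
    (Qf : Matrix (Fin n) (Fin n) ℝ) (x : Fin n → ℝ) (u : ℕ → Fin m → ℝ) (N : ℕ) : ℝ :=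
  (∑ k ∈ Finset.range N,
      (1 / 2) * (lintraj A B x u k ⬝ᵥ Q *ᵥ lintraj A B x u k + u k ⬝ᵥ R *ᵥ u k)) +
    (1 / 2) * (lintraj A B x u N ⬝ᵥ Qf *ᵥ lintraj A B x u N)

section Riccati

variable {ι κ α : Type*} [Fintype ι] [Fintype κ] [DecidableEq κ] [CommRing α]
  (A : Matrix ι ι α) (B : Matrix ι κ α) (Q : Matrix ι ι α) (R : Matrix κ κ α) (P : Matrix ι ι α)

noncomputable def riccatiStep : Matrix ι ι α :=
  Aᵀ * P * A - Aᵀ * P * B * (R + Bᵀ * P * B)⁻¹ * Bᵀ * P * A + Q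

noncomputable def riccatiGain : Matrix κ ι α :=
  (R + Bᵀ * P * B)⁻¹ * (Bᵀ * P * A)

variable {A B Q R P}

theorem Matrix.IsSymm.transpose_mul_mul {ι' : Type*} [Fintype ι'] {P : Matrix ι ι α}
    (hP : P.IsSymm) (M : Matrix ι ι' α) : (Mᵀ * P * M).IsSymm := by
  simp only [IsSymm, transpose_mul, transpose_transpose, hP.eq, Matrix.mul_assoc]

theorem Matrix.IsSymm.dotProduct_mulVec_comm {M : Matrix ι ι α} (hM : M.IsSymm) (x y : ι → α) :
    x ⬝ᵥ M *ᵥ y = y ⬝ᵥ M *ᵥ x := by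
  rw [← dotProduct_transpose_mulVec, hM.eq]

theorem Matrix.dotProduct_transpose_mulVec' {ι' : Type*} [Fintype ι'] (M : Matrix ι' ι α)
    (x : ι → α) (y : ι' → α) :
    x ⬝ᵥ Mᵀ *ᵥ y = (M *ᵥ x) ⬝ᵥ y := by
  rw [dotProduct_mulVec, vecMul_transpose]

theorem Matrix.IsSymm.riccatiStep (hQ : Q.IsSymm) (hR : R.IsSymm) (hP : P.IsSymm) :
    (riccatiStep A B Q R P).IsSymm := by
  have hS : (R + Bᵀ * P * B)⁻¹.IsSymm := (hR.add (hP.transpose_mul_mul B)).inv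
  refine ((hP.transpose_mul_mul A).sub ?_).add hQ
  convert hS.transpose_mul_mul (Bᵀ * P * A) using 1
  simp only [transpose_mul, transpose_transpose, hP.eq, Matrix.mul_assoc]

theorem completeSquare_riccatiStep (hP : P.IsSymm) (hR : R.IsSymm)
    (hS : IsUnit (R + Bᵀ * P * B).det) (x : ι → α) (u : κ → α) :
    x ⬝ᵥ Q *ᵥ x + u ⬝ᵥ R *ᵥ u + (A *ᵥ x + B *ᵥ u) ⬝ᵥ P *ᵥ (A *ᵥ x + B *ᵥ u) =
      x ⬝ᵥ riccatiStep A B Q R P *ᵥ x +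
        (u + riccatiGain A B R P *ᵥ x) ⬝ᵥ (R + Bᵀ * P * B) *ᵥ (u + riccatiGain A B R P *ᵥ x) := by
  have hSv : (R + Bᵀ * P * B) *ᵥ riccatiGain A B R P *ᵥ x = Bᵀ *ᵥ P *ᵥ A *ᵥ x := by
    rw [riccatiGain, mulVec_mulVec, mul_nonsing_inv_cancel_left _ _ hS]
    simp only [mulVec_mulVec, Matrix.mul_assoc]
  have hstep : x ⬝ᵥ riccatiStep A B Q R P *ᵥ x = (A *ᵥ x) ⬝ᵥ P *ᵥ (A *ᵥ x) -
      (A *ᵥ x) ⬝ᵥ P *ᵥ (B *ᵥ riccatiGain A B R P *ᵥ x) + x ⬝ᵥ Q *ᵥ x := by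
    have hmid : Aᵀ * P * B * (R + Bᵀ * P * B)⁻¹ * Bᵀ * P * A =
        Aᵀ * (P * (B * riccatiGain A B R P)) := by
      simp only [riccatiGain, Matrix.mul_assoc]
    rw [riccatiStep, hmid, add_mulVec, sub_mulVec, dotProduct_add, dotProduct_sub,
      ← mulVec_mulVec, ← mulVec_mulVec, ← mulVec_mulVec, ← mulVec_mulVec,
      dotProduct_transpose_mulVec', dotProduct_transpose_mulVec']
    simp only [mulVec_mulVec]
  have hSS : (R + Bᵀ * P * B).IsSymm := hR.add (hP.transpose_mul_mul B)
  set S := R + Bᵀ * P * B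
  set v := riccatiGain A B R P *ᵥ x
  have hSu : u ⬝ᵥ S *ᵥ u = u ⬝ᵥ R *ᵥ u + (B *ᵥ u) ⬝ᵥ P *ᵥ (B *ᵥ u) := by
    simp only [S, add_mulVec, dotProduct_add, ← mulVec_mulVec, dotProduct_transpose_mulVec']
  have hsq : (u + v) ⬝ᵥ S *ᵥ (u + v) = u ⬝ᵥ S *ᵥ u + 2 * (u ⬝ᵥ S *ᵥ v) + v ⬝ᵥ S *ᵥ v := by
    simp only [mulVec_add, dotProduct_add, add_dotProduct, hSS.dotProduct_mulVec_comm v u]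
    ring
  rw [hstep, hsq, hSu, hSv, dotProduct_transpose_mulVec', dotProduct_transpose_mulVec',
    hP.dotProduct_mulVec_comm (B *ᵥ v)]
  simp only [mulVec_add, dotProduct_add, add_dotProduct, hP.dotProduct_mulVec_comm (B *ᵥ u)]
  ring

end Riccati

section Real

theorem Matrix.PosSemidef.isSymm {ι : Type*} {M : Matrix ι ι ℝ} (hM : M.PosSemidef) : M.IsSymm :=
  isHermitian_iff_isSymm.mp hM.isHermitian

theorem Matrix.PosSemidef.dotProduct_mulVec_self_nonneg {ι : Type*} [Fintype ι]
    {M : Matrix ι ι ℝ} (hM : M.PosSemidef) (x : ι → ℝ) : 0 ≤ x ⬝ᵥ M *ᵥ x := by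
  simpa using hM.dotProduct_mulVec_nonneg x

theorem Matrix.PosDef.add_transpose_mul_mul {ι κ : Type*} [Fintype ι] [Fintype κ]
    {R : Matrix κ κ ℝ} {P : Matrix ι ι ℝ} (hR : R.PosDef) (hP : P.PosSemidef)
    (B : Matrix ι κ ℝ) : (R + Bᵀ * P * B).PosDef := by
  simpa using hR.add_posSemidef (hP.conjTranspose_mul_mul_same B)

variable {ι κ : Type*} [Fintype ι] [Fintype κ] [DecidableEq κ]
  {A : Matrix ι ι ℝ} {B : Matrix ι κ ℝ} {Q : Matrix ι ι ℝ} {R : Matrix κ κ ℝ} {P : Matrix ι ι ℝ}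

theorem dotProduct_riccatiStep_mulVec_le (hR : R.PosDef) (hP : P.PosSemidef) (x : ι → ℝ)
    (u : κ → ℝ) : x ⬝ᵥ riccatiStep A B Q R P *ᵥ x ≤
      x ⬝ᵥ Q *ᵥ x + u ⬝ᵥ R *ᵥ u + (A *ᵥ x + B *ᵥ u) ⬝ᵥ P *ᵥ (A *ᵥ x + B *ᵥ u) := by
  have hS := hR.add_transpose_mul_mul hP B
  rw [completeSquare_riccatiStep hP.isSymm hR.posSemidef.isSymm
    ((isUnit_iff_isUnit_det _).mp hS.isUnit)]
  linarith [hS.posSemidef.dotProduct_mulVec_self_nonneg (u + riccatiGain A B R P *ᵥ x)]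

theorem dotProduct_riccatiStep_mulVec_eq (hR : R.PosDef) (hP : P.PosSemidef) (x : ι → ℝ) :
    x ⬝ᵥ riccatiStep A B Q R P *ᵥ x =
      x ⬝ᵥ Q *ᵥ x + (-(riccatiGain A B R P *ᵥ x)) ⬝ᵥ R *ᵥ (-(riccatiGain A B R P *ᵥ x)) +
        (A *ᵥ x + B *ᵥ (-(riccatiGain A B R P *ᵥ x))) ⬝ᵥ P *ᵥ
          (A *ᵥ x + B *ᵥ (-(riccatiGain A B R P *ᵥ x))) := by
  have hS := hR.add_transpose_mul_mul hP B
  rw [completeSquare_riccatiStep hP.isSymm hR.posSemidef.isSymm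
    ((isUnit_iff_isUnit_det _).mp hS.isUnit), neg_add_cancel, zero_dotProduct,
    add_zero]

theorem Matrix.PosSemidef.riccatiStep (hQ : Q.PosSemidef) (hR : R.PosDef) (hP : P.PosSemidef) :
    (riccatiStep A B Q R P).PosSemidef := by
  refine .of_dotProduct_mulVec_nonneg
    (isHermitian_iff_isSymm.mpr (hQ.isSymm.riccatiStep hR.posSemidef.isSymm hP.isSymm))
    fun x => ?_
  rw [star_trivial, dotProduct_riccatiStep_mulVec_eq hR hP]
  have := hQ.dotProduct_mulVec_self_nonneg x
  have := hR.posSemidef.dotProduct_mulVec_self_nonneg (-(riccatiGain A B R P *ᵥ x))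
  have := hP.dotProduct_mulVec_self_nonneg (A *ᵥ x + B *ᵥ (-(riccatiGain A B R P *ᵥ x)))
  positivity

end Real

section LQ

variable {n m : ℕ} {A : Matrix (Fin n) (Fin n) ℝ} {B : Matrix (Fin n) (Fin m) ℝ}
  {Q Qf : Matrix (Fin n) (Fin n) ℝ} {R : Matrix (Fin m) (Fin m) ℝ}

theorem ric_succ (k : ℕ) : ric A B Q R Qf (k + 1) = riccatiStep A B Q R (ric A B Q R Qf k) := rfl

theorem posSemidef_ric (hQ : Q.PosSemidef) (hQf : Qf.PosSemidef) (hR : R.PosDef) :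
    ∀ k, (ric A B Q R Qf k).PosSemidef
  | 0 => hQf
  | k + 1 => hQ.riccatiStep hR (posSemidef_ric hQ hQf hR k)

theorem lintraj_succ' (x : Fin n → ℝ) (u : ℕ → Fin m → ℝ) (k : ℕ) :
    lintraj A B x u (k + 1) = lintraj A B (A *ᵥ x + B *ᵥ u 0) (fun j => u (j + 1)) k := by
  induction k with
  | zero => rfl
  | succ k ih => rw [lintraj, ih, lintraj]

theorem lqCost_zero (x : Fin n → ℝ) (u : ℕ → Fin m → ℝ) :
    lqCost A B Q R Qf x u 0 = (1 / 2) * (x ⬝ᵥ Qf *ᵥ x) := by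
  simp [lqCost, lintraj]

theorem lqCost_succ (x : Fin n → ℝ) (u : ℕ → Fin m → ℝ) (N : ℕ) :
    lqCost A B Q R Qf x u (N + 1) = (1 / 2) * (x ⬝ᵥ Q *ᵥ x + u 0 ⬝ᵥ R *ᵥ u 0) +
      lqCost A B Q R Qf (A *ᵥ x + B *ᵥ u 0) (fun j => u (j + 1)) N := by
  simp only [lqCost, Finset.sum_range_succ', lintraj_succ', lintraj.eq_1]
  ring

theorem isLeast_lqCost (hQ : Q.PosSemidef) (hQf : Qf.PosSemidef) (hR : R.PosDef) (N : ℕ)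
    (x : Fin n → ℝ) : IsLeast (Set.range fun u => lqCost A B Q R Qf x u N)
      ((1 / 2) * (x ⬝ᵥ ric A B Q R Qf N *ᵥ x)) := by
  induction N generalizing x with
  | zero =>
    simp only [lqCost_zero, Set.range_const]
    exact isLeast_singleton
  | succ N ih =>
    have hP : (ric A B Q R Qf N).PosSemidef := posSemidef_ric hQ hQf hR N
    rw [ric_succ]
    constructor
    · set v := -(riccatiGain A B R (ric A B Q R Qf N) *ᵥ x)
      obtain ⟨u, hu⟩ := (ih (A *ᵥ x + B *ᵥ v)).1
      refine ⟨fun | 0 => v | k + 1 => u k, ?_⟩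
      beta_reduce at hu
      simp only [lqCost_succ, hu]
      rw [dotProduct_riccatiStep_mulVec_eq hR hP]
      ring
    · rintro _ ⟨u, rfl⟩
      have hle := dotProduct_riccatiStep_mulVec_le (A := A) (B := B) (Q := Q) hR hP x (u 0)
      have htail := (ih (A *ᵥ x + B *ᵥ u 0)).2 ⟨fun j => u (j + 1), rfl⟩
      beta_reduce at htail
      simp only [lqCost_succ]
      linarith

end LQ

/-- The optimal value of the discrete-time LQ problem with horizon `N` is the Riccati
quadratic form: `inf_u Σ ½(x_kᵀQx_k + u_kᵀRu_k) + ½x_NᵀQ_f x_N = ½xᵀP_N x`. -/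
theorem lq_value_eq_riccati {n m : ℕ}
    (A : Matrix (Fin n) (Fin n) ℝ) (B : Matrix (Fin n) (Fin m) ℝ)
    (Q Qf : Matrix (Fin n) (Fin n) ℝ) (R : Matrix (Fin m) (Fin m) ℝ)
    (hQ : Q.PosSemidef) (hQf : Qf.PosSemidef) (hR : R.PosDef)
    (N : ℕ) (x : Fin n → ℝ) :
    (⨅ u : ℕ → Fin m → ℝ, lqCost A B Q R Qf x u N) =
      (1 / 2) * (x ⬝ᵥ ric A B Q R Qf N *ᵥ x) :=
  (isLeast_lqCost hQ hQf hR N x).isGLB.ciInf_eq
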